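/- arXiv:2502.03626 — 3 statements merged into one kernel-verified Lean document; each statement's English description precedes it below -/
import Mathlib

section
/- Let G be a profinite group and C a procyclic (topologically cyclic) closed subgroup of G. If H = C^g ∩ C is nontrivial for some g ∈ G (where C^g = g⁻¹Cg), then g normalizes H. -/
/-!
Write `C` for the closure of `⟨c⟩`. Since `H ≤ C` and `gHg⁻¹ ≤ C`, in every finite quotient
`G ⧸ N` the images of `H` and `gHg⁻¹` are subgroups of the cyclic group generated by the image
of `c`, and they have the same order because they are conjugate. A finite cyclic group has at
most one subgroup of each order, so the two images coincide. A closed subgroup of a profinite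
group is determined by its images in the finite quotients, and both `H` and `gHg⁻¹` are closed,
hence `gHg⁻¹ = H`.
-/

open Subgroup
open scoped Pointwise

theorem IsCyclic.subgroup_eq_of_card_eq {Z : Type*} [Group Z] [Finite Z] [IsCyclic Z]
    {A B : Subgroup Z} (h : Nat.card A = Nat.card B) : A = B := by
  let := IsCyclic.commGroup (α := Z)
  have eq_ker : ∀ D : Subgroup Z, D = (powMonoidHom (Nat.card D) : Z →* Z).ker := fun D ↦
    eq_of_le_of_card_ge
      (fun x hx ↦ congrArg Subtype.val (pow_card_eq_one' (G := D) (x := ⟨x, hx⟩)))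
      (by rw [IsCyclic.card_powMonoidHom_ker, Nat.gcd_eq_right D.card_subgroup_dvd_card])
  rw [eq_ker A, eq_ker B, h]

theorem Subgroup.eq_of_le_zpowers_of_card_eq {Q : Type*} [Group Q] [Finite Q] {q : Q}
    {A B : Subgroup Q} (hA : A ≤ zpowers q) (hB : B ≤ zpowers q)
    (h : Nat.card A = Nat.card B) : A = B := by
  have hAB : A.subgroupOf (zpowers q) = B.subgroupOf (zpowers q) :=
    IsCyclic.subgroup_eq_of_card_eq <| by
      rw [Nat.card_congr (subgroupOfEquivOfLe hA).toEquiv,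
        Nat.card_congr (subgroupOfEquivOfLe hB).toEquiv, h]
  rwa [subgroupOf_inj, inf_of_le_left hA, inf_of_le_left hB] at hAB

section TopologicalGroup

variable {G : Type*} [Group G] [TopologicalSpace G] [IsTopologicalGroup G]

theorem QuotientGroup.map_mk'_topologicalClosure {N : Subgroup G} [N.Normal]
    (hN : IsOpen (N : Set G)) (K : Subgroup G) :
    K.topologicalClosure.map (mk' N) = K.map (mk' N) := by
  refine le_antisymm (map_le_iff_le_comap.2 ?_) (map_mono K.le_topologicalClosure)
  refine topologicalClosure_minimal _ (le_comap_map _ K) ?_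
  rw [comap_map_mk']
  exact isClosed_of_isOpen _ (isOpen_mono le_sup_left hN)

theorem Subgroup.isClosed_map_conj {H : Subgroup G} (hH : IsClosed (H : Set G)) (g : G) :
    IsClosed ((H.map (MulAut.conj g) : Subgroup G) : Set G) := by
  rw [map_equiv_eq_comap_symm]
  exact hH.preimage ((IsTopologicalGroup.continuous_conj g⁻¹).congr fun x ↦ by simp)

variable [CompactSpace G] [TotallyDisconnectedSpace G]

theorem Subgroup.le_of_forall_map_mk'_le {A B : Subgroup G} (hB : IsClosed (B : Set G))
    (h : ∀ N : OpenNormalSubgroup G,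
      A.map (QuotientGroup.mk' N.toSubgroup) ≤ B.map (QuotientGroup.mk' N.toSubgroup)) :
    A ≤ B := by
  intro x hxA
  by_contra hxB
  have hU : IsOpen (x⁻¹ • (B : Set G))ᶜ :=
    ((Homeomorph.mulLeft x⁻¹).isClosedMap _ hB).isOpen_compl
  have h1 : (1 : G) ∉ x⁻¹ • (B : Set G) := by
    rintro ⟨b, hb, hxb⟩
    exact hxB (inv_mul_eq_one.mp hxb ▸ hb)
  obtain ⟨N, hN⟩ := ProfiniteGrp.exist_openNormalSubgroup_sub_open_nhds_of_one hU h1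
  have hx : x ∈ B ⊔ N.toSubgroup := by
    simpa only [QuotientGroup.ker_mk'] using map_le_map_iff.1 (h N) hxA
  obtain ⟨b, hb, n, hn, rfl⟩ := mem_sup_of_normal_right.mp hx
  exact hN (inv_mem hn) ⟨b, hb, by simp⟩

theorem Subgroup.map_conj_eq_of_le_closure_zpowers {c g : G} {H : Subgroup G}
    (hH : IsClosed (H : Set G)) (hHc : H ≤ (zpowers c).topologicalClosure)
    (hgH : H.map (MulAut.conj g) ≤ (zpowers c).topologicalClosure) :
    H.map (MulAut.conj g) = H := by
  have hquot (N : OpenNormalSubgroup G) :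
      (H.map (MulAut.conj g)).map (QuotientGroup.mk' N.toSubgroup) =
        H.map (QuotientGroup.mk' N.toSubgroup) := by
    set f := QuotientGroup.mk' N.toSubgroup
    have : Finite (G ⧸ N.toSubgroup) := quotient_finite_of_isOpen _ N.isOpen
    have hC : (zpowers c).topologicalClosure.map f = zpowers (f c) := by
      rw [QuotientGroup.map_mk'_topologicalClosure N.isOpen, MonoidHom.map_zpowers]
    have hconj : (H.map (MulAut.conj g)).map f = (H.map f).map (MulAut.conj (f g)) := by
      rw [map_map, map_map]
      congr 1
    refine eq_of_le_zpowers_of_card_eq (hC ▸ map_mono hgH) (hC ▸ map_mono hHc) ?_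
    rw [hconj, card_map_of_injective (MulAut.conj (f g)).injective]
  exact le_antisymm (le_of_forall_map_mk'_le hH fun N ↦ (hquot N).le)
    (le_of_forall_map_mk'_le (isClosed_map_conj hH g) fun N ↦ (hquot N).ge)

end TopologicalGroup

theorem procyclic_conj_inter_normalizes_general
    {G : Type*} [Group G] [TopologicalSpace G] [IsTopologicalGroup G]
    [CompactSpace G] [TotallyDisconnectedSpace G]
    (C : Subgroup G)
    (hCprocyclic : ∃ c : G, C = (Subgroup.zpowers c).topologicalClosure)
    (g : G)
    (H : Subgroup G)
    (hH : H = Subgroup.map ((MulAut.conj g).symm.toMonoidHom) C ⊓ C) :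
    g ∈ Subgroup.normalizer (H : Set G) := by
  obtain ⟨c, rfl⟩ := hCprocyclic
  have hHclosed : IsClosed (H : Set G) := by
    rw [hH, coe_inf]
    have hC := (zpowers c).isClosed_topologicalClosure
    have hCg := isClosed_map_conj hC g⁻¹
    rw [map_inv] at hCg
    exact hCg.inter hC
  have hgH : H.map (MulAut.conj g) ≤ (zpowers c).topologicalClosure := by
    rw [map_le_iff_le_comap, comap_equiv_eq_map_symm]
    exact hH ▸ inf_le_left
  exact mem_normalizer_iff_map_conj_eq.2 <|
    map_conj_eq_of_le_closure_zpowers hHclosed (hH ▸ inf_le_right) hgH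

/-- Let `G` be a profinite group and `C` a procyclic (topologically cyclic)
closed subgroup of `G`. If `H = C^g ∩ C` is nontrivial for some `g ∈ G`
(where `C^g = g⁻¹Cg`), then `g` normalizes `H`. -/
theorem procyclic_conj_inter_normalizes
    {G : Type*} [Group G] [TopologicalSpace G] [IsTopologicalGroup G]
    [CompactSpace G] [TotallyDisconnectedSpace G]
    (C : Subgroup G) (hCclosed : IsClosed (C : Set G))
    (hCprocyclic : ∃ c : G, C = (Subgroup.zpowers c).topologicalClosure)
    (g : G)
    (H : Subgroup G)
    (hH : H = Subgroup.map ((MulAut.conj g).symm.toMonoidHom) C ⊓ C)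
    (hHnontriv : H ≠ ⊥) :
    g ∈ Subgroup.normalizer (H : Set G) :=
  procyclic_conj_inter_normalizes_general C hCprocyclic g H hH
end

section
/- Let G be a finite group, C a cyclic subgroup of G, and g ∈ G. If H = (g⁻¹Cg) ∩ C is nontrivial, then g⁻¹Hg = H. -/
open Subgroup

/-- In a finite cyclic group, subgroups of the same cardinality coincide. -/
lemma cyclic_subgroup_eq_of_card_eq {α : Type*} [Group α] [Finite α] [IsCyclic α]
    (A B : Subgroup α) (h : Nat.card A = Nat.card B) : A = B := by
  classical
  have : Fintype α := Fintype.ofFinite α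
  set d : ℕ := Nat.card A with hd
  have hd0 : 0 < d := Nat.card_pos
  set S : Finset α := Finset.univ.filter (fun x => x ^ d = 1) with hS
  have hScard : S.card ≤ d := IsCyclic.card_pow_eq_one_le hd0
  have key : ∀ K : Subgroup α, Nat.card K = d → (K : Set α).toFinset = S := by
    intro K hK
    have hsub : (K : Set α).toFinset ⊆ S := by
      intro x hx
      simp only [Set.mem_toFinset, SetLike.mem_coe] at hx
      simp only [hS, Finset.mem_filter, Finset.mem_univ, true_and]
      have := pow_card_eq_one' (G := K) (x := ⟨x, hx⟩)
      rw [hK] at this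
      simpa using congrArg Subtype.val this
    have hcard : (K : Set α).toFinset.card = d := by
      rw [Set.toFinset_card, ← Nat.card_eq_fintype_card]
      exact hK
    exact Finset.eq_of_subset_of_card_le hsub (by omega)
  have hA := key A rfl
  have hB := key B h.symm
  have : (A : Set α).toFinset = (B : Set α).toFinset := hA.trans hB.symm
  ext x
  have := Finset.ext_iff.mp this x
  simpa [Set.mem_toFinset] using this

/-- Let `G` be a finite group, `C` a cyclic subgroup of `G`, and `g ∈ G`.
If `H = (g⁻¹Cg) ∩ C` is nontrivial, then `g⁻¹Hg = H`. -/
theorem finite_cyclic_conj_inter_normalizes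
    {G : Type*} [Group G] [Finite G]
    (C : Subgroup G) (hC : IsCyclic C)
    (g : G)
    (H : Subgroup G)
    (hH : H = Subgroup.map ((MulAut.conj g).symm.toMonoidHom) C ⊓ C)
    (hHnontriv : H ≠ ⊥) :
    Subgroup.map ((MulAut.conj g).symm.toMonoidHom) H = H := by
  set φ := (MulAut.conj g).symm.toMonoidHom with hφ
  have hinj : Function.Injective φ := (MulAut.conj g).symm.injective
  set C' : Subgroup G := Subgroup.map φ C with hC'
  have hC'cyc : IsCyclic C' := by
    have e : C ≃* C' := Subgroup.equivMapOfInjective C φ hinj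
    exact isCyclic_of_surjective e.toMonoidHom e.surjective
  have hHC : H ≤ C := by rw [hH]; exact inf_le_right
  have hHC' : H ≤ C' := by rw [hH]; exact inf_le_left
  have hmapC' : Subgroup.map φ H ≤ C' := Subgroup.map_mono hHC
  have hcard : Nat.card (Subgroup.map φ H) = Nat.card H :=
    Nat.card_congr (Subgroup.equivMapOfInjective H φ hinj).toEquiv.symm
  have := cyclic_subgroup_eq_of_card_eq ((Subgroup.map φ H).subgroupOf C')
      (H.subgroupOf C') ?_
  · have h1 := congrArg (Subgroup.map C'.subtype) this
    rwa [Subgroup.subgroupOf_map_subtype, Subgroup.subgroupOf_map_subtype,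
      inf_eq_left.mpr hmapC', inf_eq_left.mpr hHC'] at h1
  · rw [Nat.card_congr (Subgroup.subgroupOfEquivOfLe hmapC').toEquiv,
      Nat.card_congr (Subgroup.subgroupOfEquivOfLe hHC').toEquiv, hcard]
end

section
/- The kernel of the natural surjection from the free product G₁ * G₂ onto the direct product G₁ × G₂ is a free group, freely generated by the commutators [g₁, g₂] with g₁ ∈ G₁ \ {1}, g₂ ∈ G₂ \ {1}. -/
/-!
Every element of `G₁ ∗ G₂` has a unique normal form `c * h * g` with `h ∈ G₂`, `g ∈ G₁` and `c` a
word in the commutators `⁅a, b⁆`. To see that the commutators satisfy no relation, let `G₁ ∗ G₂`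
act on triples (word in the free group on the pairs `(a, b)`, `g`, `h`) by a formula mirroring left
multiplication on normal forms: conjugates of commutators are again products of commutators,
`g ⁅a, b⁆ g⁻¹ = ⁅g a, b⁆ ⁅g, b⁆⁻¹` and `h ⁅a, b⁆ h⁻¹ = ⁅a, h⁆⁻¹ ⁅a, h b⁆`, and moving `g` past `h`
costs the commutator `⁅g, h⁆`. The word component of the orbit of the trivial triple is a left
inverse of the map from the free group, and the orbit also exhibits every element of the kernel of
`G₁ ∗ G₂ → G₁ × G₂` as a word in the commutators.
-/

open Monoid
open scoped commutatorElement

namespace FreeGroup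

theorem injective_lift_subtypeVal_and_range_eq {α G : Type*} [Group G] {f : α → G}
    {T : Set G} (hT : T = Set.range f) (hf : Function.Injective (lift f)) :
    Function.Injective (lift (Subtype.val : T → G)) ∧
      (lift (Subtype.val : T → G)).range = (lift f).range := by
  subst hT
  have hf' : Function.Injective f := by
    simpa [Function.comp_def] using hf.comp of_injective
  have : lift (Subtype.val : Set.range f → G) = (lift f).comp
      (freeGroupCongr (Equiv.ofInjective f hf')).symm.toMonoidHom :=
    ext_hom _ _ fun ⟨_, a, rfl⟩ => by simp
  rw [this, MonoidHom.range_comp, MonoidHom.range_eq_top_of_surjective _ (MulEquiv.surjective _),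
    ← MonoidHom.range_eq_map]
  exact ⟨hf.comp (MulEquiv.injective _), rfl⟩

end FreeGroup

namespace CartesianSubgroup

open Coprod

variable {G₁ G₂ : Type*} [Group G₁] [Group G₂]

variable (G₁ G₂) in
abbrev NontrivialPair : Type _ := {p : G₁ × G₂ // p.1 ≠ 1 ∧ p.2 ≠ 1}

open Classical in
/-- The free generator standing for `⁅a, b⁆`; like that commutator it is `1` when `a = 1` or
`b = 1`, so the formulas below need no case split. -/
noncomputable def gen (a : G₁) (b : G₂) : FreeGroup (NontrivialPair G₁ G₂) :=
  if h : a ≠ 1 ∧ b ≠ 1 then .of ⟨(a, b), h⟩ else 1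

@[simp] lemma gen_one_left (b : G₂) : gen (1 : G₁) b = 1 := by simp [gen]

@[simp] lemma gen_one_right (a : G₁) : gen a (1 : G₂) = 1 := by simp [gen]

lemma gen_coe (p : NontrivialPair G₁ G₂) : gen p.1.1 p.1.2 = .of p := by simp [gen, p.2]

lemma lift_gen {H : Type*} [Group H] (φ : G₁ → G₂ → H) (hφ₁ : ∀ b, φ 1 b = 1)
    (hφ₂ : ∀ a, φ a 1 = 1) (a : G₁) (b : G₂) :
    FreeGroup.lift (fun p : NontrivialPair G₁ G₂ => φ p.1.1 p.1.2) (gen a b) = φ a b := by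
  by_cases ha : a = 1
  · simp [ha, hφ₁]
  by_cases hb : b = 1
  · simp [hb, hφ₂]
  simp [gen, ha, hb]

noncomputable def toCoprod : FreeGroup (NontrivialPair G₁ G₂) →* Coprod G₁ G₂ :=
  FreeGroup.lift fun p => ⁅(inl p.1.1 : Coprod G₁ G₂), inr p.1.2⁆

lemma toCoprod_gen (a : G₁) (b : G₂) : toCoprod (gen a b) = ⁅(inl a : Coprod G₁ G₂), inr b⁆ :=
  lift_gen (fun a b => ⁅(inl a : Coprod G₁ G₂), inr b⁆) (by simp) (by simp) a b

noncomputable def conjInl (g : G₁) :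
    FreeGroup (NontrivialPair G₁ G₂) →* FreeGroup (NontrivialPair G₁ G₂) :=
  FreeGroup.lift fun p => gen (g * p.1.1) p.1.2 * (gen g p.1.2)⁻¹

noncomputable def conjInr (h : G₂) :
    FreeGroup (NontrivialPair G₁ G₂) →* FreeGroup (NontrivialPair G₁ G₂) :=
  FreeGroup.lift fun p => (gen p.1.1 h)⁻¹ * gen p.1.1 (h * p.1.2)

lemma conjInl_gen (g a : G₁) (b : G₂) : conjInl g (gen a b) = gen (g * a) b * (gen g b)⁻¹ :=
  lift_gen (fun a b => gen (g * a) b * (gen g b)⁻¹) (by simp) (by simp) a b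

lemma conjInr_gen (h : G₂) (a : G₁) (b : G₂) :
    conjInr h (gen a b) = (gen a h)⁻¹ * gen a (h * b) :=
  lift_gen (fun a b => (gen a h)⁻¹ * gen a (h * b)) (by simp) (by simp) a b

lemma conjInl_one : conjInl (1 : G₁) = MonoidHom.id (FreeGroup (NontrivialPair G₁ G₂)) :=
  FreeGroup.ext_hom _ _ fun p => by simp [← gen_coe p, conjInl_gen]

lemma conjInl_mul (g g' : G₁) :
    conjInl (g * g') = (conjInl g).comp (conjInl g' : FreeGroup (NontrivialPair G₁ G₂) →* _) :=
  FreeGroup.ext_hom _ _ fun p => by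
    simp only [← gen_coe p, MonoidHom.comp_apply, conjInl_gen, map_mul, map_inv, mul_assoc]
    group

lemma conjInr_one : conjInr (1 : G₂) = MonoidHom.id (FreeGroup (NontrivialPair G₁ G₂)) :=
  FreeGroup.ext_hom _ _ fun p => by simp [← gen_coe p, conjInr_gen]

lemma conjInr_mul (h h' : G₂) :
    conjInr (h * h') = (conjInr h).comp (conjInr h' : FreeGroup (NontrivialPair G₁ G₂) →* _) :=
  FreeGroup.ext_hom _ _ fun p => by
    simp only [← gen_coe p, MonoidHom.comp_apply, conjInr_gen, map_mul, map_inv, mul_assoc]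
    group

lemma toCoprod_conjInl (g : G₁) (u : FreeGroup (NontrivialPair G₁ G₂)) :
    toCoprod (conjInl g u) = inl g * toCoprod u * (inl g)⁻¹ := by
  suffices toCoprod.comp (conjInl g) = (MulAut.conj (inl g)).toMonoidHom.comp toCoprod from
    DFunLike.congr_fun this u
  refine FreeGroup.ext_hom _ _ fun p => ?_
  simp only [← gen_coe p, MonoidHom.comp_apply, conjInl_gen, map_mul, map_inv, toCoprod_gen,
    MulEquiv.coe_toMonoidHom, MulAut.conj_apply, commutatorElement_def]
  group

lemma toCoprod_conjInr (h : G₂) (u : FreeGroup (NontrivialPair G₁ G₂)) :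
    toCoprod (conjInr h u) = inr h * toCoprod u * (inr h)⁻¹ := by
  suffices toCoprod.comp (conjInr h) = (MulAut.conj (inr h)).toMonoidHom.comp toCoprod from
    DFunLike.congr_fun this u
  refine FreeGroup.ext_hom _ _ fun p => ?_
  simp only [← gen_coe p, MonoidHom.comp_apply, conjInr_gen, map_mul, map_inv, toCoprod_gen,
    MulEquiv.coe_toMonoidHom, MulAut.conj_apply, commutatorElement_def]
  group

variable (G₁ G₂) in
abbrev State : Type _ := FreeGroup (NontrivialPair G₁ G₂) × G₁ × G₂

noncomputable def State.eval (s : State G₁ G₂) : Coprod G₁ G₂ :=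
  toCoprod s.1 * inr s.2.2 * inl s.2.1

-- The extra factor comes from `inl a * inr h = ⁅inl a, inr h⁆ * inr h * inl a`.
noncomputable def actInl : G₁ →* Function.End (State G₁ G₂) where
  toFun a s := (conjInl a s.1 * gen a s.2.2, a * s.2.1, s.2.2)
  map_one' := funext fun s => by
    simp only [conjInl_one, gen_one_left, one_mul, mul_one, MonoidHom.id_apply]
    rfl
  map_mul' a a' := funext fun s => by
    change _ = (conjInl a (conjInl a' s.1 * gen a' s.2.2) * gen a s.2.2, a * (a' * s.2.1), s.2.2)
    simp [conjInl_mul, conjInl_gen, mul_assoc]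

noncomputable def actInr : G₂ →* Function.End (State G₁ G₂) where
  toFun b s := (conjInr b s.1, s.2.1, b * s.2.2)
  map_one' := funext fun s => by
    simp only [conjInr_one, one_mul, MonoidHom.id_apply]
    rfl
  map_mul' b b' := funext fun s => by
    change _ = (conjInr b (conjInr b' s.1), s.2.1, b * (b' * s.2.2))
    simp [conjInr_mul, mul_assoc]

noncomputable def act : Coprod G₁ G₂ →* Function.End (State G₁ G₂) := Coprod.lift actInl actInr

lemma act_inl (a : G₁) (s : State G₁ G₂) :
    act (inl a) s = (conjInl a s.1 * gen a s.2.2, a * s.2.1, s.2.2) := rfl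

lemma act_inr (b : G₂) (s : State G₁ G₂) : act (inr b) s = (conjInr b s.1, s.2.1, b * s.2.2) := rfl

lemma act_mul_apply (w w' : Coprod G₁ G₂) (s : State G₁ G₂) :
    act (w * w') s = act w (act w' s) := by
  rw [map_mul]; rfl

lemma eval_act (w : Coprod G₁ G₂) (s : State G₁ G₂) : (act w s).eval = w * s.eval := by
  induction w using Coprod.induction_on generalizing s with
  | inl a =>
    simp only [State.eval, act_inl, map_mul, toCoprod_conjInl, toCoprod_gen, commutatorElement_def]
    group
  | inr b =>
    simp only [State.eval, act_inr, map_mul, toCoprod_conjInr]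
    group
  | mul x y ihx ihy => rw [act_mul_apply, ihx, ihy, mul_assoc]

lemma conjInl_conjInr_conjInl_inv_conjInr_inv (x : G₁) (y : G₂)
    (v : FreeGroup (NontrivialPair G₁ G₂)) :
    conjInl x (conjInr y (conjInl x⁻¹ (conjInr y⁻¹ v))) = gen x y * v * (gen x y)⁻¹ := by
  suffices (conjInl x).comp ((conjInr y).comp ((conjInl x⁻¹).comp (conjInr y⁻¹))) =
      (MulAut.conj (gen x y)).toMonoidHom from DFunLike.congr_fun this v
  refine FreeGroup.ext_hom _ _ fun p => ?_
  simp only [← gen_coe p, MonoidHom.comp_apply, map_mul, map_inv, conjInl_gen, conjInr_gen,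
    mul_inv_cancel, gen_one_left, gen_one_right, MulEquiv.coe_toMonoidHom,
    MulAut.conj_apply]
  group

lemma act_commutator (x : G₁) (y : G₂) (v : FreeGroup (NontrivialPair G₁ G₂)) :
    act ⁅(inl x : Coprod G₁ G₂), inr y⁆ (v, 1, 1) = (gen x y * v, 1, 1) := by
  rw [commutatorElement_def, ← map_inv, ← map_inv]
  simp only [act_mul_apply, act_inl, act_inr, mul_one, mul_inv_cancel, gen_one_right, map_mul,
    map_inv (conjInl x), conjInl_conjInr_conjInl_inv_conjInr_inv, conjInr_gen,
    conjInl_gen, gen_one_left, one_mul, inv_inv, inv_mul_cancel_right]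

lemma act_toCoprod (u v : FreeGroup (NontrivialPair G₁ G₂)) :
    act (toCoprod u) (v, 1, 1) = (u * v, 1, 1) := by
  induction u using FreeGroup.induction_on generalizing v with
  | C1 => rw [map_one, one_mul]; rfl
  | of p => rw [← gen_coe p, toCoprod_gen, act_commutator]
  | inv_of p hp =>
    have h := congrArg (act (toCoprod (.of p))⁻¹) (hp ((.of p)⁻¹ * v))
    rwa [← act_mul_apply, inv_mul_cancel, map_one, mul_inv_cancel_left, eq_comm, ← map_inv] at h
  | mul u u' hu hu' => rw [map_mul, act_mul_apply, hu', hu, mul_assoc]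

theorem toCoprod_injective :
    Function.Injective (toCoprod : FreeGroup (NontrivialPair G₁ G₂) →* Coprod G₁ G₂) :=
  Function.LeftInverse.injective (g := fun w => (act w (1, 1, 1)).1) fun u => by
    simp [act_toCoprod]

lemma toProd_toCoprod (u : FreeGroup (NontrivialPair G₁ G₂)) : toProd (toCoprod u) = 1 := by
  suffices toProd.comp toCoprod = 1 from DFunLike.congr_fun this u
  refine FreeGroup.ext_hom _ _ fun p => ?_
  simp [← gen_coe p, toCoprod_gen, commutatorElement_def, Prod.ext_iff]

lemma toProd_eval (s : State G₁ G₂) : toProd s.eval = (s.2.1, s.2.2) := by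
  simp [State.eval, toProd_toCoprod]

theorem range_toCoprod :
    (toCoprod : FreeGroup (NontrivialPair G₁ G₂) →* Coprod G₁ G₂).range = toProd.ker := by
  refine le_antisymm (fun _ ⟨u, hu⟩ => hu ▸ toProd_toCoprod u) fun w hw => ?_
  set s := act w (1, 1, 1)
  have hw_eval : s.eval = w := by simpa [State.eval] using eval_act w (1, 1, 1)
  obtain ⟨hs₁, hs₂⟩ : s.2.1 = 1 ∧ s.2.2 = 1 := by
    rwa [MonoidHom.mem_ker, ← hw_eval, toProd_eval, Prod.mk_eq_one] at hw
  exact ⟨s.1, by rw [← hw_eval, State.eval, hs₁, hs₂]; simp⟩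

end CartesianSubgroup

/-- The kernel of the natural surjection from the free product `G₁ ∗ G₂`
onto the direct product `G₁ × G₂` (the Cartesian subgroup) is a free group, freely
generated by the commutators `⁅g₁, g₂⁆` with `g₁ ∈ G₁ \ {1}`, `g₂ ∈ G₂ \ {1}`:
the canonical homomorphism from the free group on this set of commutators into
`G₁ ∗ G₂` is injective with image exactly this kernel. -/
theorem cartesian_subgroup_free
    {G₁ G₂ : Type*} [Group G₁] [Group G₂] :
    letI π : Coprod G₁ G₂ →* G₁ × G₂ :=
      Coprod.lift (MonoidHom.inl G₁ G₂) (MonoidHom.inr G₁ G₂)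
    letI T : Set (Coprod G₁ G₂) :=
      {x | ∃ g₁ : G₁, ∃ g₂ : G₂, g₁ ≠ 1 ∧ g₂ ≠ 1 ∧ x = ⁅(Coprod.inl g₁ : Coprod G₁ G₂), Coprod.inr g₂⁆}
    Function.Injective (FreeGroup.lift (Subtype.val : T → Coprod G₁ G₂)) ∧
      (FreeGroup.lift (Subtype.val : T → Coprod G₁ G₂)).range = π.ker := by
  refine (FreeGroup.injective_lift_subtypeVal_and_range_eq ?_
    CartesianSubgroup.toCoprod_injective).imp_right (·.trans CartesianSubgroup.range_toCoprod)
  ext x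
  simp [eq_comm, and_assoc]
end
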